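/- Let C be a bivariate copula admitting a tail dependence function Λ, and define the normalized tail dependence functions Λ₁*(t) = Λ(t,1)/t, Λ₂*(t) = Λ(1,t)/t, and Λ*(t) = max(Λ₁*(t), Λ₂*(t)) for t ∈ (0,1]. Then Λ₁*, Λ₂*, and Λ* take values in [0,1], are continuous, and are decreasing on (0,1]; consequently, the limits Λ₁*(0) = lim_{t↓0} Λ₁*(t), Λ₂*(0) = lim_{t↓0} Λ₂*(t), and Λ*(0) = lim_{t↓0} Λ*(t) exist. -/

import Mathlib

open MeasureTheory Filter Set

/-- A bivariate copula: `C : [0,1]² → [0,1]` with the grounded/marginal conditions and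
the 2-increasing property. -/
def IsCopula (C : ℝ → ℝ → ℝ) : Prop :=
  (∀ u ∈ Icc (0:ℝ) 1, ∀ v ∈ Icc (0:ℝ) 1, C u v ∈ Icc (0:ℝ) 1) ∧
  (∀ u ∈ Icc (0:ℝ) 1, C u 0 = 0 ∧ C 0 u = 0 ∧ C u 1 = u ∧ C 1 u = u) ∧
  (∀ u u' v v' : ℝ, u ∈ Icc (0:ℝ) 1 → u' ∈ Icc (0:ℝ) 1 →
    v ∈ Icc (0:ℝ) 1 → v' ∈ Icc (0:ℝ) 1 → u ≤ u' → v ≤ v' →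
    0 ≤ C u' v' - C u' v - C u v' + C u v)

/-- `Λ` is the tail dependence function of `C`:
`Λ(u,v) = lim_{p↓0} C(pu,pv)/p` for every `(u,v) ∈ [0,∞)²`. -/
def HasTDF (C Λ : ℝ → ℝ → ℝ) : Prop :=
  ∀ u v : ℝ, 0 ≤ u → 0 ≤ v →
    Tendsto (fun p : ℝ => C (p * u) (p * v) / p)
      (nhdsWithin (0:ℝ) (Ioi 0)) (nhds (Λ u v))

open Topology

/-!
Every inequality a copula satisfies on `[0,1]²` survives the limit defining `Λ`: `Λ` is
nonnegative, nondecreasing and `1`-Lipschitz in each argument, and `Λ(u,v) ≤ min(u,v)`.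
This gives the bounds and the continuity of `Λ(t,1)/t`. The limit also makes `Λ` positively
homogeneous, so `Λ(t,1)/t = Λ(1,1/t)`, which is nonincreasing in `t` since `Λ(1,·)` is
nondecreasing; a bounded monotone function has a one-sided limit. The statements about
`Λ(1,t)/t` follow by applying the same facts to the transposed copula `(u,v) ↦ C(v,u)`.
-/

variable {C Λ : ℝ → ℝ → ℝ}

namespace IsCopula

theorem swap (hC : IsCopula C) : IsCopula fun u v => C v u := by
  obtain ⟨hrange, hbdry, hrect⟩ := hC
  refine ⟨fun u hu v hv => hrange v hv u hu,
    fun u hu => ⟨(hbdry u hu).2.1, (hbdry u hu).1, (hbdry u hu).2.2.2, (hbdry u hu).2.2.1⟩,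
    fun u u' v v' hu hu' hv hv' huu' hvv' => ?_⟩
  linarith [hrect v v' u u' hv hv' hu hu' hvv' huu']

theorem sub_mem_Icc_left (hC : IsCopula C) {u u' v : ℝ} (hu : u ∈ Icc (0:ℝ) 1)
    (hu' : u' ∈ Icc (0:ℝ) 1) (hv : v ∈ Icc (0:ℝ) 1) (huu' : u ≤ u') :
    C u' v - C u v ∈ Icc 0 (u' - u) := by
  have hbottom := hC.2.2 u u' 0 v hu hu' (left_mem_Icc.2 zero_le_one) hv huu' hv.1
  have htop := hC.2.2 u u' v 1 hu hu' hv (right_mem_Icc.2 zero_le_one) huu' hv.2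
  constructor
  · linarith [(hC.2.1 u hu).1, (hC.2.1 u' hu').1]
  · linarith [(hC.2.1 u hu).2.2.1, (hC.2.1 u' hu').2.2.1]

theorem mem_Icc_left (hC : IsCopula C) {u v : ℝ} (hu : u ∈ Icc (0:ℝ) 1)
    (hv : v ∈ Icc (0:ℝ) 1) : C u v ∈ Icc 0 u := by
  simpa [(hC.2.1 v hv).2.1] using
    hC.sub_mem_Icc_left (left_mem_Icc.2 zero_le_one) hu hv hu.1

end IsCopula

theorem eventually_mul_mem_Icc {a : ℝ} (ha : 0 ≤ a) :
    ∀ᶠ p in 𝓝[>] (0:ℝ), p * a ∈ Icc (0:ℝ) 1 := by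
  have hlim : Tendsto (fun p : ℝ => p * a) (𝓝[>] 0) (𝓝 0) := by
    simpa using ((continuous_mul_const a).tendsto 0).mono_left nhdsWithin_le_nhds
  filter_upwards [self_mem_nhdsWithin, hlim.eventually (gt_mem_nhds one_pos)] with p hp hp1
  exact ⟨mul_nonneg (le_of_lt hp) ha, hp1.le⟩

theorem div_mem_Icc_of_mem_Icc_mul {p a x : ℝ} (hp : 0 < p) (hx : x ∈ Icc 0 (p * a)) :
    x / p ∈ Icc 0 a :=
  ⟨div_nonneg hx.1 hp.le, (div_le_iff₀ hp).2 (by linarith [hx.2, mul_comm p a])⟩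

namespace HasTDF

theorem swap (hΛ : HasTDF C Λ) : HasTDF (fun u v => C v u) (fun u v => Λ v u) :=
  fun u v hu hv => hΛ v u hv hu

theorem mem_Icc_left (hC : IsCopula C) (hΛ : HasTDF C Λ) {u v : ℝ} (hu : 0 ≤ u) (hv : 0 ≤ v) :
    Λ u v ∈ Icc 0 u := by
  refine isClosed_Icc.mem_of_tendsto (hΛ u v hu hv) ?_
  filter_upwards [eventually_mul_mem_Icc hu, eventually_mul_mem_Icc hv, self_mem_nhdsWithin]
    with p hpu hpv hp
  exact div_mem_Icc_of_mem_Icc_mul hp (hC.mem_Icc_left hpu hpv)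

theorem sub_mem_Icc_left (hC : IsCopula C) (hΛ : HasTDF C Λ) {u u' v : ℝ} (hu : 0 ≤ u)
    (huu' : u ≤ u') (hv : 0 ≤ v) : Λ u' v - Λ u v ∈ Icc 0 (u' - u) := by
  have hu' := hu.trans huu'
  refine isClosed_Icc.mem_of_tendsto ((hΛ u' v hu' hv).sub (hΛ u v hu hv)) ?_
  filter_upwards [eventually_mul_mem_Icc hu, eventually_mul_mem_Icc hu',
    eventually_mul_mem_Icc hv, self_mem_nhdsWithin] with p hpu hpu' hpv hp
  rw [div_sub_div_same]
  refine div_mem_Icc_of_mem_Icc_mul hp ?_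
  rw [mul_sub]
  exact hC.sub_mem_Icc_left hpu hpu' hpv (mul_le_mul_of_nonneg_left huu' (le_of_lt hp))

theorem monotoneOn_left (hC : IsCopula C) (hΛ : HasTDF C Λ) {v : ℝ} (hv : 0 ≤ v) :
    MonotoneOn (fun u => Λ u v) (Ici 0) := fun _ hu _ _ huu' =>
  sub_nonneg.1 (hΛ.sub_mem_Icc_left hC hu huu' hv).1

theorem lipschitzOnWith_left (hC : IsCopula C) (hΛ : HasTDF C Λ) {v : ℝ} (hv : 0 ≤ v) :
    LipschitzOnWith 1 (fun u => Λ u v) (Ici 0) := by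
  refine LipschitzOnWith.of_le_add fun x hx y hy => ?_
  rcases le_total x y with hxy | hyx
  · linarith [hΛ.monotoneOn_left hC hv hx hy hxy, dist_nonneg (x := x) (y := y)]
  · linarith [(hΛ.sub_mem_Icc_left hC hy hyx hv).2, Real.dist_eq x y, le_abs_self (x - y)]

theorem homogeneous (hΛ : HasTDF C Λ) {s u v : ℝ} (hs : 0 < s) (hu : 0 ≤ u) (hv : 0 ≤ v) :
    Λ (s * u) (s * v) = s * Λ u v := by
  have hscale : Tendsto (s * ·) (𝓝[>] (0:ℝ)) (𝓝[>] 0) :=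
    tendsto_comap.mono_left (comap_mulLeft_nhdsGT_zero hs).ge
  refine tendsto_nhds_unique (hΛ (s * u) (s * v) (by positivity) (by positivity)) ?_
  refine (((hΛ u v hu hv).comp hscale).const_mul s).congr fun p => ?_
  simp only [Function.comp_apply]
  rw [← mul_div_assoc, mul_div_mul_left _ _ hs.ne']
  ring_nf

theorem div_eq_apply_one_inv (hΛ : HasTDF C Λ) {t : ℝ} (ht : 0 < t) : Λ t 1 / t = Λ 1 t⁻¹ := by
  have h := hΛ.homogeneous ht zero_le_one (inv_nonneg.2 ht.le)
  rw [mul_one, mul_inv_cancel₀ ht.ne'] at h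
  rw [h, mul_div_cancel_left₀ _ ht.ne']

theorem div_self_mem_Icc (hC : IsCopula C) (hΛ : HasTDF C Λ) {t : ℝ} (ht : 0 < t) :
    Λ t 1 / t ∈ Icc 0 1 :=
  div_mem_Icc_of_mem_Icc_mul ht (by rw [mul_one]; exact hΛ.mem_Icc_left hC ht.le zero_le_one)

theorem continuousOn_div (hC : IsCopula C) (hΛ : HasTDF C Λ) :
    ContinuousOn (fun t => Λ t 1 / t) (Ioi 0) :=
  ((hΛ.lipschitzOnWith_left hC zero_le_one).continuousOn.mono Ioi_subset_Ici_self).div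
    continuousOn_id fun _ ht => ne_of_gt ht

theorem antitoneOn_div (hC : IsCopula C) (hΛ : HasTDF C Λ) :
    AntitoneOn (fun t => Λ t 1 / t) (Ioi 0) := by
  intro s hs t ht hst
  simp only [hΛ.div_eq_apply_one_inv hs, hΛ.div_eq_apply_one_inv ht]
  exact hΛ.swap.monotoneOn_left hC.swap zero_le_one
    (mem_Ici.2 (inv_pos.2 ht).le) (mem_Ici.2 (inv_pos.2 hs).le) (inv_anti₀ hs hst)

end HasTDF

theorem AntitoneOn.exists_tendsto_nhdsGT {α β : Type*} [LinearOrder α] [DenselyOrdered α]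
    [TopologicalSpace α] [OrderTopology α] [ConditionallyCompleteLinearOrder β]
    [TopologicalSpace β] [OrderTopology β]
    {f : α → β} {a b : α} {c : β} (hab : a < b)
    (hf : AntitoneOn f (Ioc a b)) (hc : ∀ t ∈ Ioc a b, f t ≤ c) :
    ∃ l, Tendsto f (𝓝[>] a) (𝓝 l) :=
  ⟨_, (hf.mono Ioo_subset_Ioc_self).tendsto_nhdsWithin_Ioo_right (nonempty_Ioo.2 hab)
    ⟨c, forall_mem_image.2 fun t ht => hc t (Ioo_subset_Ioc_self ht)⟩⟩

theorem normalized_tdf_properties (C Λ : ℝ → ℝ → ℝ)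
    (hC : IsCopula C) (hΛ : HasTDF C Λ) :
    (∀ t ∈ Ioc (0:ℝ) 1, Λ t 1 / t ∈ Icc (0:ℝ) 1 ∧ Λ 1 t / t ∈ Icc (0:ℝ) 1 ∧
      max (Λ t 1 / t) (Λ 1 t / t) ∈ Icc (0:ℝ) 1) ∧
    ContinuousOn (fun t => Λ t 1 / t) (Ioc (0:ℝ) 1) ∧
    ContinuousOn (fun t => Λ 1 t / t) (Ioc (0:ℝ) 1) ∧
    ContinuousOn (fun t => max (Λ t 1 / t) (Λ 1 t / t)) (Ioc (0:ℝ) 1) ∧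
    AntitoneOn (fun t => Λ t 1 / t) (Ioc (0:ℝ) 1) ∧
    AntitoneOn (fun t => Λ 1 t / t) (Ioc (0:ℝ) 1) ∧
    AntitoneOn (fun t => max (Λ t 1 / t) (Λ 1 t / t)) (Ioc (0:ℝ) 1) ∧
    (∃ l₁ : ℝ, Tendsto (fun t => Λ t 1 / t) (nhdsWithin (0:ℝ) (Ioi 0)) (nhds l₁)) ∧
    (∃ l₂ : ℝ, Tendsto (fun t => Λ 1 t / t) (nhdsWithin (0:ℝ) (Ioi 0)) (nhds l₂)) ∧
    (∃ l : ℝ, Tendsto (fun t => max (Λ t 1 / t) (Λ 1 t / t))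
      (nhdsWithin (0:ℝ) (Ioi 0)) (nhds l)) := by
  have hb₁ (t) (ht : t ∈ Ioc (0:ℝ) 1) := hΛ.div_self_mem_Icc hC ht.1
  have hb₂ (t) (ht : t ∈ Ioc (0:ℝ) 1) := hΛ.swap.div_self_mem_Icc hC.swap ht.1
  have hb (t) (ht : t ∈ Ioc (0:ℝ) 1) : max (Λ t 1 / t) (Λ 1 t / t) ∈ Icc (0:ℝ) 1 :=
    ⟨le_max_of_le_left (hb₁ t ht).1, max_le (hb₁ t ht).2 (hb₂ t ht).2⟩
  have hpos : Ioc (0:ℝ) 1 ⊆ Ioi 0 := Ioc_subset_Ioi_self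
  have hc₁ := (hΛ.continuousOn_div hC).mono hpos
  have hc₂ := (hΛ.swap.continuousOn_div hC.swap).mono hpos
  have ha₁ := (hΛ.antitoneOn_div hC).mono hpos
  have ha₂ := (hΛ.swap.antitoneOn_div hC.swap).mono hpos
  have ha : AntitoneOn (fun t => max (Λ t 1 / t) (Λ 1 t / t)) (Ioc (0:ℝ) 1) :=
    fun s hs t ht hst => max_le_max (ha₁ hs ht hst) (ha₂ hs ht hst)
  exact ⟨fun t ht => ⟨hb₁ t ht, hb₂ t ht, hb t ht⟩, hc₁, hc₂, hc₁.sup hc₂, ha₁, ha₂, ha,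
    ha₁.exists_tendsto_nhdsGT one_pos fun t ht => (hb₁ t ht).2,
    ha₂.exists_tendsto_nhdsGT one_pos fun t ht => (hb₂ t ht).2,
    ha.exists_tendsto_nhdsGT one_pos fun t ht => (hb t ht).2⟩
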